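/- Let p₁, …, p_N be symmetric matrix noncommutative polynomials with each p_j(0) invertible, and for each n let 𝒲(n) ⊆ ⋃_j ℑ_{p_j}(n) where ℑ_{p_j}(n) = {X ∈ 𝕊ₙ(ℝ)^g : p_j(X) invertible}. Suppose 𝒲 = (𝒲(n)) respects direct sums and each 𝒲(n) contains 0, is open, and is connected. Then there exists k such that 𝒲 ⊆ 𝒟_{p_k}, where 𝒟_{p_k}(n) is the connected component of 0 in ℑ_{p_k}(n). -/

import Mathlib

open Matrix
open scoped Matrix.Norms.L2Operator

noncomputable section

/-- A `g`-tuple of `n × n` real matrices. -/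
abbrev Tuple (g n : ℕ) := Fin g → Matrix (Fin n) (Fin n) ℝ

/-- Evaluation of a word `w` (of length `k`) in `g` noncommuting letters at the tuple `X`. -/
def wordEval {g n : ℕ} (X : Tuple g n) {k : ℕ} (w : Fin k → Fin g) :
    Matrix (Fin n) (Fin n) ℝ :=
  (List.ofFn fun i => X (w i)).prod

/-- A `δ × δ` matrix noncommutative polynomial in `g` variables of degree at most `d`,
given by its matrix coefficients indexed by words. -/
structure NCPoly (g d δ : ℕ) where
  coeff : ∀ k : ℕ, (Fin k → Fin g) → Matrix (Fin δ) (Fin δ) ℝ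

/-- Evaluation `p(X) = Σ_{|w| ≤ d} p_w ⊗ w(X)`. -/
def NCPoly.eval {g d δ : ℕ} (p : NCPoly g d δ) {n : ℕ} (X : Tuple g n) :
    Matrix (Fin δ × Fin n) (Fin δ × Fin n) ℝ :=
  ∑ k ∈ Finset.range (d + 1), ∑ w : Fin k → Fin g,
    Matrix.kroneckerMap (· * ·) (p.coeff k w) (wordEval X w)

/-- `p(0)`, the constant coefficient of `p`. -/
def NCPoly.constantCoeff {g d δ : ℕ} (p : NCPoly g d δ) : Matrix (Fin δ) (Fin δ) ℝ :=
  p.coeff 0 finZeroElim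

/-- `p` takes symmetric values at tuples of symmetric matrices. -/
def NCPoly.IsSymmPoly {g d δ : ℕ} (p : NCPoly g d δ) : Prop :=
  ∀ (n : ℕ) (X : Tuple g n), (∀ j, (X j).IsSymm) → (p.eval X).IsSymm

/-- The invertibility set `ℑ_p(n)` inside the symmetric tuples. -/
def invSet {g d δ : ℕ} (p : NCPoly g d δ) (n : ℕ) : Set (Tuple g n) :=
  {X | (∀ j, (X j).IsSymm) ∧ IsUnit (p.eval X)}

/-- `𝒟_p(n)`, the connected component of `0` of the invertibility set. -/
def Dset {g d δ : ℕ} (p : NCPoly g d δ) (n : ℕ) : Set (Tuple g n) :=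
  connectedComponentIn (invSet p n) 0

/-- Direct sum of tuples. -/
def dsum {g n m : ℕ} (X : Tuple g n) (Y : Tuple g m) : Tuple g (n + m) :=
  fun j => Matrix.reindex finSumFinEquiv finSumFinEquiv (Matrix.fromBlocks (X j) 0 0 (Y j))

/-!
If for every `j` some `Xⱼ ∈ 𝒲` made `pⱼ(Xⱼ)` singular, the direct sum `⊕ⱼ Xⱼ` would lie in `𝒲`
while making every `pⱼ` singular, since `p(X ⊕ Y)` is conjugate to `p(X) ⊕ p(Y)`; this contradicts
`𝒲 ⊆ ⋃ⱼ ℑ_{pⱼ}`. Hence a single `p_k` is invertible on all of `𝒲`, and each connected `𝒲(n)`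
containing `0` lies in the component `𝒟_{p_k}(n)` of `0`.
-/

lemma wordEval_succ {g n k : ℕ} (X : Tuple g n) (w : Fin (k + 1) → Fin g) :
    wordEval X w = X (w 0) * wordEval X (Fin.tail w) := by
  simp [wordEval, List.ofFn_succ, Fin.tail]

lemma wordEval_dsum {g n m k : ℕ} (X : Tuple g n) (Y : Tuple g m) (w : Fin k → Fin g) :
    wordEval (dsum X Y) w =
      (fromBlocks (wordEval X w) 0 0 (wordEval Y w)).submatrix
        finSumFinEquiv.symm finSumFinEquiv.symm := by
  induction k with
  | zero => simp [wordEval, fromBlocks_one]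
  | succ k ih =>
    rw [wordEval_succ, wordEval_succ X, wordEval_succ Y, ih, dsum, reindex_apply,
      submatrix_mul_equiv, fromBlocks_multiply]
    simp

def kronDsumEquiv (δ n m : ℕ) : Fin δ × Fin (n + m) ≃ (Fin δ × Fin n) ⊕ (Fin δ × Fin m) :=
  (Equiv.prodCongr (Equiv.refl _) finSumFinEquiv.symm).trans (Equiv.prodSumDistrib _ _ _)

lemma NCPoly.eval_dsum {g d δ n m : ℕ} (p : NCPoly g d δ) (X : Tuple g n) (Y : Tuple g m) :
    p.eval (dsum X Y) =
      (fromBlocks (p.eval X) 0 0 (p.eval Y)).submatrix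
        (kronDsumEquiv δ n m) (kronDsumEquiv δ n m) := by
  ext ⟨a, i⟩ ⟨b, j⟩
  rcases hi : finSumFinEquiv.symm i with i' | i' <;>
    rcases hj : finSumFinEquiv.symm j with j' | j' <;>
      simp [NCPoly.eval, Matrix.sum_apply, wordEval_dsum, kronDsumEquiv, hi, hj]

lemma NCPoly.isUnit_eval_dsum_iff {g d δ n m : ℕ} (p : NCPoly g d δ) (X : Tuple g n)
    (Y : Tuple g m) : IsUnit (p.eval (dsum X Y)) ↔ IsUnit (p.eval X) ∧ IsUnit (p.eval Y) := by
  simp only [isUnit_iff_isUnit_det, p.eval_dsum, det_submatrix_equiv_self, det_fromBlocks_zero₂₁,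
    IsUnit.mul_iff]

section DirectSums

variable {g : ℕ} {W : ∀ n : ℕ, Set (Tuple g n)}

lemma exists_mem_isUnit_eval_imp_forall
    (hdsum : ∀ n m, ∀ X ∈ W n, ∀ Y ∈ W m, dsum X Y ∈ W (n + m))
    (hzero : (0 : Tuple g 0) ∈ W 0) :
    ∀ {M : ℕ} (ns : Fin M → ℕ) (Xs : ∀ i, Tuple g (ns i)), (∀ i, Xs i ∈ W (ns i)) →
      ∃ (m : ℕ) (Z : Tuple g m), Z ∈ W m ∧
        ∀ {d δ : ℕ} (q : NCPoly g d δ), IsUnit (q.eval Z) → ∀ i, IsUnit (q.eval (Xs i))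
  | 0, _, _, _ => ⟨0, 0, hzero, fun _ _ i => i.elim0⟩
  | M + 1, ns, Xs, hXs => by
    obtain ⟨m, Z, hZ, hdom⟩ := exists_mem_isUnit_eval_imp_forall hdsum hzero
      (fun i => ns i.succ) (fun i => Xs i.succ) (fun i => hXs i.succ)
    refine ⟨ns 0 + m, dsum (Xs 0) Z, hdsum _ _ _ (hXs 0) _ hZ, fun q hq i => ?_⟩
    rw [q.isUnit_eval_dsum_iff] at hq
    exact Fin.cases hq.1 (hdom q hq.2) i

lemma exists_forall_isUnit_eval_of_subset_iUnion {N d : ℕ} {δ : Fin N → ℕ}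
    {P : ∀ j : Fin N, NCPoly g d (δ j)} (hsub : ∀ n, W n ⊆ ⋃ j, invSet (P j) n)
    (hdsum : ∀ n m, ∀ X ∈ W n, ∀ Y ∈ W m, dsum X Y ∈ W (n + m))
    (hzero : (0 : Tuple g 0) ∈ W 0) :
    ∃ k, ∀ n, ∀ X ∈ W n, IsUnit ((P k).eval X) := by
  by_contra! hbad
  choose ns Xs hXs hsing using hbad
  obtain ⟨m, Z, hZ, hdom⟩ := exists_mem_isUnit_eval_imp_forall hdsum hzero ns Xs hXs
  obtain ⟨j, -, hj⟩ := Set.mem_iUnion.mp (hsub m hZ)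
  exact hsing j (hdom (P j) hj j)

end DirectSums

theorem graded_union_subset_single_component_general
    {g d N : ℕ} (δ : Fin N → ℕ) (P : ∀ j : Fin N, NCPoly g d (δ j))
    (W : ∀ n : ℕ, Set (Tuple g n))
    (hsub : ∀ n, W n ⊆ ⋃ j, invSet (P j) n)
    (hdsum : ∀ n m, ∀ X ∈ W n, ∀ Y ∈ W m, dsum X Y ∈ W (n + m))
    (hzero : ∀ n, (0 : Tuple g n) ∈ W n)
    (hconn : ∀ n, IsConnected (W n)) :
    ∃ k, ∀ n, W n ⊆ Dset (P k) n := by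
  obtain ⟨k, hk⟩ := exists_forall_isUnit_eval_of_subset_iUnion hsub hdsum (hzero 0)
  refine ⟨k, fun n => (hconn n).isPreconnected.subset_connectedComponentIn (hzero n) ?_⟩
  intro X hX
  obtain ⟨j, hsymm, -⟩ := Set.mem_iUnion.mp (hsub n hX)
  exact ⟨hsymm, hk n X hX⟩

/-- If `𝒲(n) ⊆ ⋃_j ℑ_{p_j}(n)`, `𝒲` respects direct sums, and each `𝒲(n)` contains `0`, is
open (in the symmetric tuples) and connected, then `𝒲` is contained in a single `𝒟_{p_k}`. -/
theorem graded_union_subset_single_component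
    {g d N : ℕ} (δ : Fin N → ℕ) (P : ∀ j : Fin N, NCPoly g d (δ j))
    (hsym : ∀ j, (P j).IsSymmPoly) (h0 : ∀ j, IsUnit (P j).constantCoeff)
    (W : ∀ n : ℕ, Set (Tuple g n))
    (hsub : ∀ n, W n ⊆ ⋃ j, invSet (P j) n)
    (hdsum : ∀ n m, ∀ X ∈ W n, ∀ Y ∈ W m, dsum X Y ∈ W (n + m))
    (hzero : ∀ n, (0 : Tuple g n) ∈ W n)
    (hopen : ∀ n, IsOpen {X : {X : Tuple g n // ∀ j, (X j).IsSymm} | (X : Tuple g n) ∈ W n})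
    (hconn : ∀ n, IsConnected (W n)) :
    ∃ k, ∀ n, W n ⊆ Dset (P k) n :=
  graded_union_subset_single_component_general δ P W hsub hdsum hzero hconn
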